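/- Let N_c, C_x, C_y, E_x, E_y be positive integers satisfying E_x · E_y · N_c > (C_x + E_x − 1) · (C_y + E_y − 1), and let S_1, …, S_{N_c} : ℤ × ℤ → ℂ be finitely supported functions, each supported in a C_x × C_y rectangle. Then there exists a family α_1, …, α_{N_c} : ℤ × ℤ → ℂ, not all identically zero, with each α_c supported in an E_x × E_y rectangle, such that for EVERY finitely supported m : ℤ × ℤ → ℂ, the multi-coil k-space data ρ_c := S_c ⋆ m satisfies Σ_{c=1}^{N_c} α_c ⋆ ρ_c = 0 identically on ℤ × ℤ; in particular the annihilating kernel (α_c) can be chosen independently of the image content m. -/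

import Mathlib

/-!
By associativity, `∑ c, α c * (S c * m) = (∑ c, α c * S c) * m`, so it suffices to find `α` with
`∑ c, α c * S c = 0`, a condition not involving `m`. The map `α ↦ ∑ c, α c * S c` is linear from
the `Ex * Ey * Nc`-dimensional space of kernel families supported in `Ex × Ey` rectangles into the
`(Cx + Ex - 1) * (Cy + Ey - 1)`-dimensional space of functions supported in the Minkowski sum of
the two rectangles, so the counting hypothesis forces a nonzero kernel.
-/

/-- `f` is supported in an `a × b` rectangle: its support is contained in
`{(x, y) : 0 ≤ x < a, 0 ≤ y < b}`. -/
def SupportedInRect (f : AddMonoidAlgebra ℂ (ℤ × ℤ)) (a b : ℕ) : Prop :=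
  ∀ p ∈ f.coeff.support, 0 ≤ p.1 ∧ p.1 < (a : ℤ) ∧ 0 ≤ p.2 ∧ p.2 < (b : ℤ)

open Module
open scoped Pointwise

namespace AddMonoidAlgebra

variable {R K G : Type*}

theorem mul_mem_supported_add [Semiring R] [AddCommMonoid G] {s t : Set G}
    {x y : AddMonoidAlgebra R G} (hx : x ∈ supported R R s) (hy : y ∈ supported R R t) :
    x * y ∈ supported R R (s + t) := by
  classical
  rw [mem_supported] at hx hy ⊢
  grw [support_coeff_mul_subset, Finset.coe_add, hx, hy]

variable [Field K]

instance finiteDimensional_supported_finset (s : Finset G) :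
    FiniteDimensional K (supported K K (s : Set G)) :=
  .equiv (supportedEquivFinsupp (s : Set G)).symm

theorem finrank_supported_finset (s : Finset G) :
    finrank K (supported K K (s : Set G)) = s.card := by
  rw [(supportedEquivFinsupp (s : Set G)).finrank_eq, finrank_finsupp_self]
  simp

end AddMonoidAlgebra

section Annihilator

variable {K A ι : Type*} [Field K] [Ring A] [Algebra K A] [Fintype ι]

theorem exists_ne_zero_sum_mul_eq_zero (P Q : Submodule K A) [FiniteDimensional K P]
    [FiniteDimensional K Q] (S : ι → A) (hPQ : ∀ c, ∀ x ∈ P, x * S c ∈ Q)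
    (hdim : finrank K Q < Fintype.card ι * finrank K P) :
    ∃ α : ι → A, α ≠ 0 ∧ (∀ c, α c ∈ P) ∧ ∑ c, α c * S c = 0 := by
  let f : (ι → P) →ₗ[K] Q := LinearMap.codRestrict Q
    (∑ c, LinearMap.mulRight K (S c) ∘ₗ P.subtype ∘ₗ LinearMap.proj c)
    fun v => by simpa using Q.sum_mem fun c _ => hPQ c _ (v c).2
  have hker : LinearMap.ker f ≠ ⊥ := LinearMap.ker_ne_bot_of_finrank_lt <| by
    simpa [finrank_pi_fintype] using hdim
  obtain ⟨v, hv, hv0⟩ := Submodule.ne_bot_iff _ |>.1 hker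
  refine ⟨fun c => v c, fun h => hv0 (funext fun c => Subtype.ext (congrFun h c)),
    fun c => (v c).2, ?_⟩
  simpa [f] using congrArg Subtype.val (LinearMap.mem_ker.1 hv)

end Annihilator

noncomputable def rect (a b : ℕ) : Finset (ℤ × ℤ) := Finset.Ico 0 (a : ℤ) ×ˢ Finset.Ico 0 (b : ℤ)

theorem rect_add_rect_subset (a b c d : ℕ) :
    rect a b + rect c d ⊆ rect (a + c - 1) (b + d - 1) := by
  intro p hp
  obtain ⟨x, hx, y, hy, rfl⟩ := Finset.mem_add.1 hp
  simp only [rect, Finset.mem_product, Finset.mem_Ico, Prod.fst_add, Prod.snd_add] at hx hy ⊢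
  omega

noncomputable abbrev rectSupported (a b : ℕ) : Submodule ℂ (AddMonoidAlgebra ℂ (ℤ × ℤ)) :=
  AddMonoidAlgebra.supported ℂ ℂ (rect a b : Set (ℤ × ℤ))

theorem mem_rectSupported_iff {f : AddMonoidAlgebra ℂ (ℤ × ℤ)} {a b : ℕ} :
    f ∈ rectSupported a b ↔ SupportedInRect f a b := by
  simp [SupportedInRect, AddMonoidAlgebra.mem_supported, Set.subset_def, rect, and_assoc]

theorem finrank_rectSupported (a b : ℕ) : finrank ℂ (rectSupported a b) = a * b := by
  simp [AddMonoidAlgebra.finrank_supported_finset, rect]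

theorem mul_mem_rectSupported {x y : AddMonoidAlgebra ℂ (ℤ × ℤ)} {a b c d : ℕ}
    (hx : x ∈ rectSupported a b) (hy : y ∈ rectSupported c d) :
    x * y ∈ rectSupported (a + c - 1) (b + d - 1) := by
  refine AddMonoidAlgebra.supported_mono ?_ (AddMonoidAlgebra.mul_mem_supported_add hx hy)
  rw [← Finset.coe_add]
  exact_mod_cast rect_add_rect_subset a b c d

theorem annihilating_kernel_content_independent_general
    (Nc Cx Cy Ex Ey : ℕ)
    (hcount : Ex * Ey * Nc > (Cx + Ex - 1) * (Cy + Ey - 1))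
    (S : Fin Nc → AddMonoidAlgebra ℂ (ℤ × ℤ))
    (hS : ∀ c, SupportedInRect (S c) Cx Cy) :
    ∃ α : Fin Nc → AddMonoidAlgebra ℂ (ℤ × ℤ),
      (¬ ∀ c, α c = 0) ∧
      (∀ c, SupportedInRect (α c) Ex Ey) ∧
      ∀ m : AddMonoidAlgebra ℂ (ℤ × ℤ),
        (∑ c, α c * (S c * m)) = 0 := by
  have hPQ (c : Fin Nc) (x : AddMonoidAlgebra ℂ (ℤ × ℤ)) (hx : x ∈ rectSupported Ex Ey) :
      x * S c ∈ rectSupported (Cx + Ex - 1) (Cy + Ey - 1) := by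
    rw [add_comm Cx, add_comm Cy]
    exact mul_mem_rectSupported hx (mem_rectSupported_iff.2 (hS c))
  obtain ⟨α, hα0, hαP, hαS⟩ := exists_ne_zero_sum_mul_eq_zero _ _ S hPQ <| by
    simpa [finrank_rectSupported, mul_comm Nc] using hcount
  refine ⟨α, fun h => hα0 (funext h), fun c => mem_rectSupported_iff.1 (hαP c), fun m => ?_⟩
  simp_rw [← mul_assoc, ← Finset.sum_mul, hαS, zero_mul]

/-- **Content-independent annihilating kernel.**
Under the counting condition `E_x E_y N_c > (C_x + E_x − 1)(C_y + E_y − 1)`,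
for coil sensitivity maps `S_c` supported in `C_x × C_y` rectangles there is a
not-identically-zero kernel family `α_c` (each supported in an `E_x × E_y`
rectangle) such that for EVERY finitely supported image content `m`, the
multi-coil k-space data `ρ_c = S_c ⋆ m` satisfies `∑ c, α_c ⋆ ρ_c = 0`.
(Convolution is multiplication in `AddMonoidAlgebra ℂ (ℤ × ℤ)`.) -/
theorem annihilating_kernel_content_independent
    (Nc Cx Cy Ex Ey : ℕ)
    (hNc : 0 < Nc) (hCx : 0 < Cx) (hCy : 0 < Cy) (hEx : 0 < Ex) (hEy : 0 < Ey)
    (hcount : Ex * Ey * Nc > (Cx + Ex - 1) * (Cy + Ey - 1))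
    (S : Fin Nc → AddMonoidAlgebra ℂ (ℤ × ℤ))
    (hS : ∀ c, SupportedInRect (S c) Cx Cy) :
    ∃ α : Fin Nc → AddMonoidAlgebra ℂ (ℤ × ℤ),
      (¬ ∀ c, α c = 0) ∧
      (∀ c, SupportedInRect (α c) Ex Ey) ∧
      ∀ m : AddMonoidAlgebra ℂ (ℤ × ℤ),
        (∑ c, α c * (S c * m)) = 0 :=
  annihilating_kernel_content_independent_general Nc Cx Cy Ex Ey hcount S hS
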